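/- Let ‖·‖₁, ‖·‖₂ be norms on ℝⁿ and suppose φᵢ : B_{‖·‖₁}(0,1) → B_{‖·‖₂}(0,1) is a sequence of δᵢ-GHAs with δᵢ → 0. Then there exists a subsequence φ_{i_k} such that for all ε > 0 there exist K ∈ ℕ (depending only on ε) and a linear map T : ℝⁿ → ℝⁿ with ‖T(x) − T(y)‖₂ = ‖x − y‖₁ for all x,y ∈ ℝⁿ, such that sup_{x ∈ B_{‖·‖₁}(0,1)} ‖φ_{i_k}(x) − T(x)‖₂ ≤ ε for all k ≥ K. -/

import Mathlib

open Filter Topology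


lemma seminorm_upper_bound {n : ℕ} (N : Seminorm ℝ (Fin n → ℝ)) :
    ∃ C > 0, ∀ v, N v ≤ C * ‖v‖ := by
  refine ⟨(∑ i, N (Pi.single i 1)) + 1, by positivity, fun v => ?_⟩
  have hv : v = ∑ i, (v i) • (Pi.single i (1:ℝ) : Fin n → ℝ) := by
    conv_lhs => rw [← Finset.univ_sum_single v]
    refine Finset.sum_congr rfl fun i _ => ?_
    rw [← Pi.single_smul, smul_eq_mul, mul_one]
  calc N v = N (∑ i, (v i) • (Pi.single i (1:ℝ) : Fin n → ℝ)) := by rw [← hv]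
    _ ≤ ∑ i, N ((v i) • (Pi.single i (1:ℝ) : Fin n → ℝ)) :=
        Finset.le_sum_of_subadditive N (map_zero N).le (map_add_le_add N) _ _
    _ ≤ ∑ i, ‖v‖ * N (Pi.single i 1) := by
        refine Finset.sum_le_sum fun i _ => ?_
        rw [map_smul_eq_mul]
        exact mul_le_mul_of_nonneg_right ((Real.norm_eq_abs (v i)) ▸ norm_le_pi_norm v i)
          (apply_nonneg N _)
    _ = (∑ i, N (Pi.single i 1)) * ‖v‖ := by
        rw [Finset.sum_mul]; exact Finset.sum_congr rfl fun _ _ => mul_comm _ _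
    _ ≤ ((∑ i, N (Pi.single i 1)) + 1) * ‖v‖ := by
        have := norm_nonneg v; nlinarith

lemma seminorm_continuous {n : ℕ} (N : Seminorm ℝ (Fin n → ℝ)) :
    Continuous fun v => N v := by
  obtain ⟨C, hC, hCb⟩ := seminorm_upper_bound N
  rw [Metric.continuous_iff]
  intro v ε hε
  refine ⟨ε / C, by positivity, fun w hw => ?_⟩
  rw [Real.dist_eq]
  have h1 : N w - N v ≤ N (w - v) := by
    have := map_add_le_add N (w - v) v; simp at this; linarith
  have h2 : N v - N w ≤ N (w - v) := by
    have := map_add_le_add N (v - w) w; simp at this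
    have := map_sub_rev N v w; linarith
  have h3 : N (w - v) ≤ C * ‖w - v‖ := hCb _
  have h4 : ‖w - v‖ < ε / C := by rw [← dist_eq_norm]; exact hw
  have : C * ‖w - v‖ < C * (ε / C) := by exact mul_lt_mul_of_pos_left h4 hC
  rw [abs_sub_lt_iff]
  rw [mul_div_cancel₀ _ (ne_of_gt hC)] at this
  constructor <;> linarith

lemma seminorm_lower_bound {n : ℕ} (N : Seminorm ℝ (Fin n → ℝ))
    (h : ∀ v, N v = 0 → v = 0) : ∃ c > 0, ∀ v, c * ‖v‖ ≤ N v := by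
  rcases isEmpty_or_nonempty (Fin n) with he | hne
  · refine ⟨1, one_pos, fun v => ?_⟩
    have : v = 0 := funext fun i => (he.false i).elim
    simp [this]
  · have hnt : Nontrivial (Fin n → ℝ) := by
      obtain ⟨i⟩ := hne
      exact ⟨Pi.single i 1, 0, by
        intro hc
        have := congrFun hc i
        simp at this⟩
    have hsph : (Metric.sphere (0 : Fin n → ℝ) 1).Nonempty :=
      NormedSpace.sphere_nonempty.mpr zero_le_one
    obtain ⟨v₀, hv₀, hmin⟩ := (isCompact_sphere (0 : Fin n → ℝ) 1).exists_isMinOn hsph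
      ((seminorm_continuous N).continuousOn)
    have hv₀n : ‖v₀‖ = 1 := by simpa using hv₀
    have hv₀0 : v₀ ≠ 0 := by intro hc; rw [hc] at hv₀n; simp at hv₀n
    have hc : 0 < N v₀ := lt_of_le_of_ne (apply_nonneg N v₀) (fun hc => hv₀0 (h v₀ hc.symm))
    refine ⟨N v₀, hc, fun v => ?_⟩
    rcases eq_or_ne v 0 with rfl | hv
    · simp
    · have hnv : 0 < ‖v‖ := norm_pos_iff.mpr hv
      have hmem : ‖v‖⁻¹ • v ∈ Metric.sphere (0 : Fin n → ℝ) 1 := by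
        simp [norm_smul, abs_of_pos (inv_pos.mpr hnv), inv_mul_cancel₀ (ne_of_gt hnv)]
      have := hmin hmem
      simp only [Set.mem_setOf_eq] at this
      have h2 : N (‖v‖⁻¹ • v) = ‖v‖⁻¹ * N v := by
        rw [map_smul_eq_mul, Real.norm_eq_abs, abs_of_pos (inv_pos.mpr hnv)]
      rw [h2] at this
      calc N v₀ * ‖v‖ ≤ (‖v‖⁻¹ * N v) * ‖v‖ := by
            exact mul_le_mul_of_nonneg_right this (norm_nonneg v)
        _ = N v := by field_simp


lemma midpoint_lemma {n : ℕ} (N₁ N₂ : Seminorm ℝ (Fin n → ℝ))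
    (h₂ : ∀ v, N₂ v = 0 → v = 0)
    (f : (Fin n → ℝ) → (Fin n → ℝ))
    (hiso : ∀ v w, N₁ v ≤ 1 → N₁ w ≤ 1 → N₂ (f v - f w) = N₁ (v - w))
    (hsurj : ∀ u, N₂ u ≤ 1 → ∃ z, N₁ z ≤ 1 ∧ f z = u)
    (x y : Fin n → ℝ) (hx : N₁ x ≤ 1) (hy : N₁ y ≤ 1)
    (hxnorm : N₂ (f x) = N₁ x)
    (hcond : N₁ x + N₁ (x - y) / 2 ≤ 1) :
    f ((1/2 : ℝ) • (x + y)) = (1/2 : ℝ) • (f x + f y) := by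
  set r : ℝ := N₁ (x - y) / 2 with hr
  have hr0 : 0 ≤ r := by have := apply_nonneg N₁ (x - y); positivity
  set m : Fin n → ℝ := (1/2 : ℝ) • (x + y) with hm
  set m' : Fin n → ℝ := (1/2 : ℝ) • (f x + f y) with hm'
  set K : ℕ → Set (Fin n → ℝ) := fun p => Nat.rec
    {z | N₁ (x - z) ≤ r ∧ N₁ (y - z) ≤ r}
    (fun p Kp => {z | z ∈ Kp ∧ ∀ w ∈ Kp, N₁ (z - w) ≤ r / 2 ^ p}) p with hK
  set K' : ℕ → Set (Fin n → ℝ) := fun p => Nat.rec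
    {u | N₂ (f x - u) ≤ r ∧ N₂ (f y - u) ≤ r}
    (fun p Kp => {u | u ∈ Kp ∧ ∀ w ∈ Kp, N₂ (u - w) ≤ r / 2 ^ p}) p with hK'
  have hK0 : K 0 = {z | N₁ (x - z) ≤ r ∧ N₁ (y - z) ≤ r} := rfl
  have hKs : ∀ p, K (p+1) = {z | z ∈ K p ∧ ∀ w ∈ K p, N₁ (z - w) ≤ r / 2 ^ p} := fun p => rfl
  have hK'0 : K' 0 = {u | N₂ (f x - u) ≤ r ∧ N₂ (f y - u) ≤ r} := rfl
  have hK's : ∀ p, K' (p+1) = {u | u ∈ K' p ∧ ∀ w ∈ K' p, N₂ (u - w) ≤ r / 2 ^ p} := fun p => rfl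
  -- membership in unit balls
  have hK0B : ∀ z ∈ K 0, N₁ z ≤ 1 := by
    rintro z ⟨hz1, _⟩
    have h5 := map_add_le_add N₁ x (z - x)
    have h6 : x + (z - x) = z := by abel
    rw [h6, map_sub_rev] at h5
    linarith
  have hK'0B : ∀ u ∈ K' 0, N₂ u ≤ 1 := by
    rintro u ⟨hu1, _⟩
    have h5 := map_add_le_add N₂ (f x) (u - f x)
    have h6 : f x + (u - f x) = u := by abel
    rw [h6, map_sub_rev] at h5
    rw [hxnorm] at h5
    linarith
  -- the big invariant
  have Ind : ∀ p,
      (∀ z ∈ K p, z ∈ K 0) ∧ (∀ u ∈ K' p, u ∈ K' 0) ∧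
      m ∈ K p ∧ m' ∈ K' p ∧
      (∀ z ∈ K p, x + y - z ∈ K p) ∧ (∀ u ∈ K' p, f x + f y - u ∈ K' p) ∧
      (∀ z ∈ K p, N₁ (z - m) ≤ r / 2 ^ p) ∧ (∀ u ∈ K' p, N₂ (u - m') ≤ r / 2 ^ p) ∧
      (∀ z ∈ K p, f z ∈ K' p) ∧ (∀ u ∈ K' p, ∃ z ∈ K p, f z = u) := by
    intro p
    induction p with
    | zero =>
      refine ⟨fun z hz => hz, fun u hu => hu, ?_, ?_, ?_, ?_, ?_, ?_, ?_, ?_⟩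
      · -- m ∈ K 0
        constructor
        · have : x - m = (1/2:ℝ) • (x - y) := by rw [hm]; module
          rw [this, map_smul_eq_mul]; simp [hr]; nlinarith [apply_nonneg N₁ (x-y)]
        · have : y - m = (1/2:ℝ) • (y - x) := by rw [hm]; module
          rw [this, map_smul_eq_mul, map_sub_rev]
          simp [hr]; nlinarith [apply_nonneg N₁ (x-y)]
      · -- m' ∈ K' 0
        constructor
        · have : f x - m' = (1/2:ℝ) • (f x - f y) := by rw [hm']; module
          rw [this, map_smul_eq_mul, hiso x y hx hy]
          simp [hr]; nlinarith [apply_nonneg N₁ (x-y)]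
        · have : f y - m' = (1/2:ℝ) • (f y - f x) := by rw [hm']; module
          rw [this, map_smul_eq_mul, map_sub_rev, hiso x y hx hy]
          simp [hr]; nlinarith [apply_nonneg N₁ (x-y)]
      · -- reflection in K 0
        rintro z ⟨hz1, hz2⟩
        constructor
        · have : x - (x + y - z) = z - y := by abel
          rw [this, map_sub_rev]; exact hz2
        · have : y - (x + y - z) = z - x := by abel
          rw [this, map_sub_rev]; exact hz1
      · -- reflection in K' 0
        rintro u ⟨hu1, hu2⟩
        constructor
        · have : f x - (f x + f y - u) = u - f y := by abel
          rw [this, map_sub_rev]; exact hu2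
        · have : f y - (f x + f y - u) = u - f x := by abel
          rw [this, map_sub_rev]; exact hu1
      · -- radius at 0
        rintro z ⟨hz1, hz2⟩
        have : z - m = (1/2:ℝ) • ((z - x) + (z - y)) := by rw [hm]; module
        rw [this, map_smul_eq_mul]
        have h1 : N₁ ((z-x) + (z-y)) ≤ N₁ (z-x) + N₁ (z-y) := map_add_le_add N₁ _ _
        rw [map_sub_rev N₁ z x, map_sub_rev N₁ z y] at h1
        have hn : ‖(1/2:ℝ)‖ = 1/2 := by norm_num
        rw [hn]
        simp only [pow_zero]
        nlinarith
      · -- radius at 0 for K'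
        rintro u ⟨hu1, hu2⟩
        have : u - m' = (1/2:ℝ) • ((u - f x) + (u - f y)) := by rw [hm']; module
        rw [this, map_smul_eq_mul]
        have h1 : N₂ ((u - f x) + (u - f y)) ≤ N₂ (u - f x) + N₂ (u - f y) := map_add_le_add N₂ _ _
        rw [map_sub_rev N₂ u (f x), map_sub_rev N₂ u (f y)] at h1
        have hn : ‖(1/2:ℝ)‖ = 1/2 := by norm_num
        rw [hn]
        simp only [pow_zero]
        nlinarith
      · -- into at 0
        rintro z hz
        obtain ⟨hz1, hz2⟩ := hz
        have hzB : N₁ z ≤ 1 := hK0B z ⟨hz1, hz2⟩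
        exact ⟨by rw [hiso x z hx hzB]; exact hz1, by rw [hiso y z hy hzB]; exact hz2⟩
      · -- onto at 0
        rintro u hu
        obtain ⟨z, hzB, hfz⟩ := hsurj u (hK'0B u hu)
        obtain ⟨hu1, hu2⟩ := hu
        refine ⟨z, ⟨?_, ?_⟩, hfz⟩
        · rw [← hiso x z hx hzB, hfz]; exact hu1
        · rw [← hiso y z hy hzB, hfz]; exact hu2
    | succ p IH =>
      obtain ⟨hsub, hsub', hmK, hm'K, hrefl, hrefl', hrad, hrad', hinto, honto⟩ := IH
      have hsubs : ∀ z ∈ K (p+1), z ∈ K p := fun z hz => hz.1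
      have hsubs' : ∀ u ∈ K' (p+1), u ∈ K' p := fun u hu => hu.1
      have hpow : r / 2 ^ (p+1) = (r / 2 ^ p) / 2 := by rw [pow_succ]; ring
      refine ⟨fun z hz => hsub z hz.1, fun u hu => hsub' u hu.1, ?_, ?_, ?_, ?_, ?_, ?_, ?_, ?_⟩
      · -- m ∈ K (p+1)
        refine ⟨hmK, fun w hw => ?_⟩
        rw [map_sub_rev]; exact hrad w hw
      · refine ⟨hm'K, fun w hw => ?_⟩
        rw [map_sub_rev]; exact hrad' w hw
      · -- reflection
        rintro z ⟨hz1, hz2⟩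
        refine ⟨hrefl z hz1, fun w hw => ?_⟩
        have hrw : x + y - w ∈ K p := hrefl w hw
        have : (x + y - z) - w = -(z - (x + y - w)) := by abel
        rw [this, map_neg_eq_map]
        exact hz2 _ hrw
      · rintro u ⟨hu1, hu2⟩
        refine ⟨hrefl' u hu1, fun w hw => ?_⟩
        have hrw : f x + f y - w ∈ K' p := hrefl' w hw
        have : (f x + f y - u) - w = -(u - (f x + f y - w)) := by abel
        rw [this, map_neg_eq_map]
        exact hu2 _ hrw
      · -- radius
        rintro z ⟨hz1, hz2⟩
        have hrw : x + y - z ∈ K p := hrefl z hz1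
        have h1 := hz2 _ hrw
        have h2 : z - (x + y - z) = (2:ℝ) • (z - m) := by rw [hm]; module
        rw [h2, map_smul_eq_mul] at h1
        have hn : ‖(2:ℝ)‖ = 2 := by norm_num
        rw [hn] at h1
        rw [hpow]; linarith
      · rintro u ⟨hu1, hu2⟩
        have hrw : f x + f y - u ∈ K' p := hrefl' u hu1
        have h1 := hu2 _ hrw
        have h2 : u - (f x + f y - u) = (2:ℝ) • (u - m') := by rw [hm']; module
        rw [h2, map_smul_eq_mul] at h1
        have hn : ‖(2:ℝ)‖ = 2 := by norm_num
        rw [hn] at h1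
        rw [hpow]; linarith
      · -- into
        rintro z ⟨hz1, hz2⟩
        refine ⟨hinto z hz1, fun w hw => ?_⟩
        obtain ⟨w', hw', hfw'⟩ := honto w hw
        have hzB : N₁ z ≤ 1 := hK0B z (hsub z hz1)
        have hwB : N₁ w' ≤ 1 := hK0B w' (hsub w' hw')
        rw [← hfw', hiso z w' hzB hwB]
        exact hz2 w' hw'
      · -- onto
        rintro u ⟨hu1, hu2⟩
        obtain ⟨z, hz, hfz⟩ := honto u hu1
        refine ⟨z, ⟨hz, fun w hw => ?_⟩, hfz⟩
        have hzB : N₁ z ≤ 1 := hK0B z (hsub z hz)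
        have hwB : N₁ w ≤ 1 := hK0B w (hsub w hw)
        rw [← hiso z w hzB hwB, hfz]
        exact hu2 _ (hinto w hw)
  -- conclude
  have hfm : ∀ p, N₂ (f m - m') ≤ r / 2 ^ p := by
    intro p
    obtain ⟨_, _, hmK, _, _, _, _, hrad', hinto, _⟩ := Ind p
    exact hrad' (f m) (hinto m hmK)
  have hzero : N₂ (f m - m') = 0 := by
    by_contra hne
    have hpos : 0 < N₂ (f m - m') := lt_of_le_of_ne (apply_nonneg _ _) (Ne.symm hne)
    obtain ⟨p, hp⟩ := pow_unbounded_of_one_lt (r / N₂ (f m - m')) (by norm_num : (1:ℝ) < 2)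
    have h1 := hfm p
    have h2 : r / 2 ^ p < N₂ (f m - m') := by
      rw [div_lt_iff₀ (by positivity)]
      rw [div_lt_iff₀ hpos] at hp
      linarith [hp]
    linarith
  have := h₂ _ hzero
  have : f m = m' := by rwa [sub_eq_zero] at this
  exact this

set_option maxHeartbeats 1000000 in
lemma linearize {n : ℕ} (N₁ N₂ : Seminorm ℝ (Fin n → ℝ))
    (h₁ : ∀ v, N₁ v = 0 → v = 0) (h₂ : ∀ v, N₂ v = 0 → v = 0)
    (f : (Fin n → ℝ) → (Fin n → ℝ))
    (hfiso : ∀ v w, N₁ v ≤ 1 → N₁ w ≤ 1 → N₂ (f v - f w) = N₁ (v - w))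
    (hfsurj : ∀ u, N₂ u ≤ 1 → ∃ z, N₁ z ≤ 1 ∧ f z = u)
    (hfnorm : ∀ v, N₁ v ≤ 1 → N₂ (f v) = N₁ v) :
    ∃ T : (Fin n → ℝ) →ₗ[ℝ] (Fin n → ℝ),
      (∀ x y, N₂ (T x - T y) = N₁ (x - y)) ∧ ∀ v, N₁ v ≤ 1 → f v = T v := by
  have hsm₁ : ∀ (t : ℝ) v, N₁ (t • v) = |t| * N₁ v := fun t v => by
    rw [map_smul_eq_mul, Real.norm_eq_abs]
  have hsm₂ : ∀ (t : ℝ) v, N₂ (t • v) = |t| * N₂ v := fun t v => by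
    rw [map_smul_eq_mul, Real.norm_eq_abs]
  have hf0 : f 0 = 0 := by
    have h := hfnorm 0 (by simp)
    rw [map_zero] at h
    exact h₂ _ h
  have hmid : ∀ x y, N₁ x ≤ 1 → N₁ y ≤ 1 → N₁ x + N₁ (x - y) / 2 ≤ 1 →
      f ((1/2 : ℝ) • (x + y)) = (1/2 : ℝ) • (f x + f y) :=
    fun x y hx hy hc => midpoint_lemma N₁ N₂ h₂ f hfiso hfsurj x y hx hy (hfnorm x hx) hc
  -- negation
  have hneg : ∀ x, N₁ x ≤ 1/2 → f (-x) = - f x := by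
    intro x hx
    have hx1 : N₁ x ≤ 1 := by linarith
    have hnx1 : N₁ (-x) ≤ 1 := by rw [map_neg_eq_map]; linarith
    have hsub : x - (-x) = (2:ℝ) • x := by module
    have hc : N₁ x + N₁ (x - -x) / 2 ≤ 1 := by
      rw [hsub, hsm₁]
      have : |(2:ℝ)| = 2 := by norm_num
      rw [this]; linarith
    have h := hmid x (-x) hx1 hnx1 hc
    have hz : (1/2:ℝ) • (x + -x) = (0 : Fin n → ℝ) := by module
    rw [hz, hf0] at h
    have h2 : f x + f (-x) = 0 := by
      have := h.symm
      rcases smul_eq_zero.mp this with h' | h'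
      · norm_num at h'
      · exact h'
    exact eq_neg_of_add_eq_zero_right h2
  -- halving
  have hhalf : ∀ x, N₁ x ≤ 1/2 → f ((1/2:ℝ) • x) = (1/2:ℝ) • f x := by
    intro x hx
    have h := hmid x 0 (by linarith) (by simp) (by simp; linarith)
    simpa [hf0] using h
  -- additivity on the half ball
  have hadd : ∀ x y, N₁ x ≤ 1/2 → N₁ y ≤ 1/2 → N₁ (x + y) ≤ 1/2 →
      f (x + y) = f x + f y := by
    intro x y hx hy hxy
    have hsub : N₁ (x - y) ≤ N₁ x + N₁ y := by
      have h := map_add_le_add N₁ x (-y)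
      rw [map_neg_eq_map] at h
      simpa [sub_eq_add_neg] using h
    have h1 := hmid x y (by linarith) (by linarith) (by linarith)
    have h2 := hhalf (x + y) hxy
    rw [h1] at h2
    have := smul_right_injective (Fin n → ℝ) (by norm_num : (1/2:ℝ) ≠ 0) h2.symm
    exact this
  -- natural multiples
  have hmul_nat : ∀ (a : ℕ) (x : Fin n → ℝ), N₁ x ≤ 1/2 → (a:ℝ) * N₁ x ≤ 1/2 →
      f ((a:ℝ) • x) = (a:ℝ) • f x := by
    intro a
    induction a with
    | zero => intro x _ _; simp [hf0]
    | succ a ih =>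
      intro x hx ha
      have h0 : 0 ≤ N₁ x := apply_nonneg _ _
      have ha' : (a:ℝ) * N₁ x ≤ 1/2 := by
        have : (a:ℝ) ≤ (a:ℝ) + 1 := by linarith
        push_cast at ha ⊢
        nlinarith
      have hax : N₁ ((a:ℝ) • x) ≤ 1/2 := by
        rw [hsm₁]; rw [abs_of_nonneg (by positivity)]; exact ha'
      have hsum : N₁ ((a:ℝ) • x + x) ≤ 1/2 := by
        have : (a:ℝ) • x + x = ((a:ℝ)+1) • x := by module
        rw [this, hsm₁, abs_of_nonneg (by positivity)]
        push_cast at ha; linarith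
      have hstep : ((a:ℕ)+1 : ℝ) • x = (a:ℝ) • x + x := by push_cast; module
      push_cast
      calc f (((a:ℝ)+1) • x) = f ((a:ℝ) • x + x) := by rw [hstep]
        _ = f ((a:ℝ) • x) + f x := hadd _ _ hax hx hsum
        _ = (a:ℝ) • f x + f x := by rw [ih x hx ha']
        _ = ((a:ℝ)+1) • f x := by module
  -- division by naturals
  have hdiv : ∀ (b : ℕ), 0 < b → ∀ x, N₁ x ≤ 1/2 →
      f ((1/(b:ℝ)) • x) = (1/(b:ℝ)) • f x := by
    intro b hb x hx
    have hb0 : (0:ℝ) < (b:ℝ) := by exact_mod_cast hb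
    have hb1 : (1:ℝ) ≤ (b:ℝ) := by exact_mod_cast hb
    have h0 : 0 ≤ N₁ x := apply_nonneg _ _
    have hxb : N₁ ((1/(b:ℝ)) • x) ≤ 1/2 := by
      rw [hsm₁, abs_of_pos (by positivity)]
      calc 1/(b:ℝ) * N₁ x ≤ 1 * N₁ x := by
            apply mul_le_mul_of_nonneg_right _ h0
            rw [div_le_one hb0]; linarith
        _ = N₁ x := one_mul _
        _ ≤ 1/2 := hx
    have hxb2 : (b:ℝ) * N₁ ((1/(b:ℝ)) • x) ≤ 1/2 := by
      rw [hsm₁, abs_of_pos (by positivity)]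
      have : (b:ℝ) * (1/(b:ℝ) * N₁ x) = N₁ x := by field_simp
      rw [this]; exact hx
    have h := hmul_nat b ((1/(b:ℝ)) • x) hxb hxb2
    have hid : (b:ℝ) • ((1/(b:ℝ)) • x) = x := by
      rw [smul_smul]; field_simp; rw [one_smul]
    rw [hid] at h
    rw [h, smul_smul]
    have : (1/(b:ℝ)) * (b:ℝ) = 1 := by field_simp
    rw [this, one_smul]
  -- rational scalars
  have hrat : ∀ (a b : ℕ), 0 < b → (a:ℝ) ≤ (b:ℝ) → ∀ x, N₁ x ≤ 1/2 →
      f (((a:ℝ)/(b:ℝ)) • x) = ((a:ℝ)/(b:ℝ)) • f x := by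
    intro a b hb hab x hx
    have hb0 : (0:ℝ) < (b:ℝ) := by exact_mod_cast hb
    have h0 : 0 ≤ N₁ x := apply_nonneg _ _
    have hxb : N₁ ((1/(b:ℝ)) • x) ≤ 1/2 := by
      rw [hsm₁, abs_of_pos (by positivity)]
      calc 1/(b:ℝ) * N₁ x ≤ 1 * N₁ x := by
            apply mul_le_mul_of_nonneg_right _ h0
            rw [div_le_one hb0]
            exact_mod_cast hb
        _ ≤ 1/2 := by rw [one_mul]; exact hx
    have hxb2 : (a:ℝ) * N₁ ((1/(b:ℝ)) • x) ≤ 1/2 := by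
      rw [hsm₁, abs_of_pos (by positivity)]
      have heq : (a:ℝ) * (1/(b:ℝ) * N₁ x) = ((a:ℝ)/(b:ℝ)) * N₁ x := by ring
      rw [heq]
      calc ((a:ℝ)/(b:ℝ)) * N₁ x ≤ 1 * N₁ x := by
            apply mul_le_mul_of_nonneg_right _ h0
            rw [div_le_one hb0]; exact hab
        _ ≤ 1/2 := by rw [one_mul]; exact hx
    have h1 := hmul_nat a ((1/(b:ℝ)) • x) hxb hxb2
    have h2 := hdiv b hb x hx
    have hid : ((a:ℝ)/(b:ℝ)) • x = (a:ℝ) • ((1/(b:ℝ)) • x) := by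
      rw [smul_smul]; congr 1; ring
    rw [hid, h1, h2, smul_smul]
    congr 1; ring
  -- real scalars in [0,1]
  have hsmul01 : ∀ (t : ℝ), 0 ≤ t → t ≤ 1 → ∀ x, N₁ x ≤ 1/2 → f (t • x) = t • f x := by
    intro t ht0 ht1 x hx
    have h0 : 0 ≤ N₁ x := apply_nonneg _ _
    have hfx : N₂ (f x) = N₁ x := hfnorm x (by linarith)
    have key : ∀ ε : ℝ, 0 < ε → N₂ (f (t • x) - t • f x) ≤ ε := by
      intro ε hε
      obtain ⟨q, hq0, hq1, hqt⟩ : ∃ q : ℚ, 0 ≤ (q:ℝ) ∧ (q:ℝ) ≤ 1 ∧ |t - (q:ℝ)| ≤ ε := by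
        by_cases ht : t ≤ ε
        · exact ⟨0, by norm_num, by norm_num, by rw [abs_of_nonneg (by push_cast; linarith)]; push_cast; linarith⟩
        · push_neg at ht
          obtain ⟨q, hq1, hq2⟩ := exists_rat_btwn (show t - ε < t by linarith)
          exact ⟨q, by linarith, by linarith, by rw [abs_of_nonneg (by linarith)]; linarith⟩
      -- express q as a/b
      have hqnum : 0 ≤ q.num := by
        rw [Rat.num_nonneg]; exact_mod_cast hq0
      set a : ℕ := q.num.toNat with ha
      set b : ℕ := q.den with hb
      have hbpos : 0 < b := q.pos
      have hcast : ((a:ℝ)/(b:ℝ)) = (q:ℝ) := by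
        rw [Rat.cast_def]
        congr 1
        rw [ha]
        exact_mod_cast congrArg (Int.cast : ℤ → ℝ) (Int.toNat_of_nonneg hqnum)
      have hab : (a:ℝ) ≤ (b:ℝ) := by
        have hb0 : (0:ℝ) < (b:ℝ) := by exact_mod_cast hbpos
        rw [← div_le_one hb0] at *
        rw [hcast]; exact hq1
      have hq := hrat a b hbpos hab x hx
      rw [hcast] at hq
      have htx : N₁ (t • x) ≤ 1 := by
        rw [hsm₁, abs_of_nonneg ht0]; nlinarith
      have hqx : N₁ ((q:ℝ) • x) ≤ 1 := by
        rw [hsm₁, abs_of_nonneg hq0]; nlinarith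
      have hd : N₂ (f (t • x) - f ((q:ℝ) • x)) = N₁ (t • x - (q:ℝ) • x) :=
        hfiso _ _ htx hqx
      have hdiff : t • x - (q:ℝ) • x = (t - (q:ℝ)) • x := by module
      rw [hdiff, hsm₁] at hd
      have hsplit : f (t • x) - t • f x =
          (f (t • x) - f ((q:ℝ) • x)) + (((q:ℝ) - t) • f x) := by
        rw [hq]; module
      rw [hsplit]
      calc N₂ _ ≤ N₂ (f (t • x) - f ((q:ℝ) • x)) + N₂ (((q:ℝ) - t) • f x) :=
            map_add_le_add _ _ _
        _ = |t - (q:ℝ)| * N₁ x + |(q:ℝ) - t| * N₂ (f x) := by rw [hd, hsm₂]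
        _ ≤ ε * (1/2) + ε * (1/2) := by
            have habs : |(q:ℝ) - t| = |t - (q:ℝ)| := abs_sub_comm _ _
            rw [habs, hfx]
            have h1 : |t - (q:ℝ)| * N₁ x ≤ ε * (1/2) := by
              apply mul_le_mul hqt hx h0 (le_of_lt hε)
            nlinarith [abs_nonneg (t - (q:ℝ))]
        _ = ε := by ring
    have hz : N₂ (f (t • x) - t • f x) = 0 := by
      by_contra hne
      have hpos : 0 < N₂ (f (t • x) - t • f x) :=
        lt_of_le_of_ne (apply_nonneg _ _) (Ne.symm hne)
      have := key (N₂ (f (t • x) - t • f x) / 2) (by linarith)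
      linarith
    have := h₂ _ hz
    rwa [sub_eq_zero] at this
  -- all scalars with |t| ≤ 1
  have hsmul : ∀ (t : ℝ), |t| ≤ 1 → ∀ x, N₁ x ≤ 1/2 → f (t • x) = t • f x := by
    intro t ht x hx
    rcases le_or_gt 0 t with h | h
    · exact hsmul01 t h (by rw [abs_of_nonneg h] at ht; exact ht) x hx
    · have hnt : 0 ≤ -t := by linarith
      have hnt1 : -t ≤ 1 := by rw [abs_of_neg h] at ht; exact ht
      have h1 : f ((-t) • x) = (-t) • f x := hsmul01 (-t) hnt hnt1 x hx
      have h2 : t • x = -((-t) • x) := by module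
      rw [h2, hneg _ ?hb, h1]
      · module
      case hb =>
        rw [hsm₁, abs_of_nonneg hnt]
        have : -t * N₁ x ≤ 1 * N₁ x := by
          apply mul_le_mul_of_nonneg_right hnt1 (apply_nonneg _ _)
        nlinarith [apply_nonneg N₁ x]
  -- basis vectors and scaling constant
  obtain ⟨c₁, hc₁pos, hc₁⟩ := seminorm_lower_bound N₁ h₁
  set e : Fin n → (Fin n → ℝ) := fun i => Pi.single i 1 with he
  set M : ℝ := ∑ i, N₁ (e i) with hM
  have hM0 : 0 ≤ M := Finset.sum_nonneg fun i _ => apply_nonneg _ _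
  set c : ℝ := 1 / (2 * (M + 1)) with hc
  have hcpos : 0 < c := by rw [hc]; positivity
  have heM : ∀ i, N₁ (e i) ≤ M := by
    intro i
    exact Finset.single_le_sum (fun j _ => apply_nonneg N₁ (e j)) (Finset.mem_univ i)
  have hcM : c * M ≤ 1/2 := by
    rw [hc]
    rw [div_mul_eq_mul_div, one_mul, div_le_iff₀ (by positivity)]
    nlinarith
  have hce : ∀ i, N₁ (c • e i) ≤ 1/2 := by
    intro i
    rw [hsm₁, abs_of_pos hcpos]
    calc c * N₁ (e i) ≤ c * M := by
          exact mul_le_mul_of_nonneg_left (heM i) (le_of_lt hcpos)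
      _ ≤ 1/2 := hcM
  have hsum_small : ∀ (s : Finset (Fin n)) (v : Fin n → ℝ), (∀ i, |v i| ≤ c) →
      N₁ (∑ i ∈ s, v i • e i) ≤ 1/2 := by
    intro s v hv
    calc N₁ (∑ i ∈ s, v i • e i) ≤ ∑ i ∈ s, N₁ (v i • e i) :=
          Finset.le_sum_of_subadditive N₁ (map_zero N₁).le (map_add_le_add N₁) _ _
      _ ≤ ∑ i ∈ s, c * N₁ (e i) := by
          refine Finset.sum_le_sum fun i _ => ?_
          rw [hsm₁]
          exact mul_le_mul_of_nonneg_right (hv i) (apply_nonneg _ _)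
      _ ≤ ∑ i, c * N₁ (e i) := by
          refine Finset.sum_le_sum_of_subset_of_nonneg (Finset.subset_univ s) ?_
          intro i _ _
          positivity
      _ = c * M := by rw [hM, Finset.mul_sum]
      _ ≤ 1/2 := hcM
  have hcomb : ∀ (s : Finset (Fin n)) (v : Fin n → ℝ), (∀ i, |v i| ≤ c) →
      f (∑ i ∈ s, v i • e i) = ∑ i ∈ s, (v i / c) • f (c • e i) := by
    intro s
    induction s using Finset.induction_on with
    | empty => intro v _; simpa using hf0
    | insert _ _ ha =>
      rename_i a s' ih'
      intro v hv
      rw [Finset.sum_insert ha, Finset.sum_insert ha]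
      have h3 : N₁ (v a • e a + ∑ i ∈ s', v i • e i) ≤ 1/2 := by
        have := hsum_small (insert a s') v hv
        rwa [Finset.sum_insert ha] at this
      have h1' : N₁ (v a • e a) ≤ 1/2 := by
        rw [hsm₁]
        calc |v a| * N₁ (e a) ≤ c * N₁ (e a) :=
              mul_le_mul_of_nonneg_right (hv a) (apply_nonneg _ _)
          _ ≤ c * M := mul_le_mul_of_nonneg_left (heM a) (le_of_lt hcpos)
          _ ≤ 1/2 := hcM
      rw [hadd _ _ h1' (hsum_small s' v hv) h3, ih' v hv]
      congr 1
      have hsm : v a • e a = (v a / c) • (c • e a) := by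
        rw [smul_smul, div_mul_cancel₀ _ (ne_of_gt hcpos)]
      rw [hsm, hsmul (v a / c) ?habs (c • e a) (hce a)]
      case habs =>
        rw [abs_div, abs_of_pos hcpos, div_le_one hcpos]
        exact hv a
  -- the linear map
  set T : (Fin n → ℝ) →ₗ[ℝ] (Fin n → ℝ) :=
    (Pi.basisFun ℝ (Fin n)).constr ℝ (fun i => (1/c) • f (c • e i)) with hT
  have hTapp : ∀ v, T v = ∑ i, (v i / c) • f (c • e i) := by
    intro v
    rw [hT, Module.Basis.constr_apply_fintype]
    refine Finset.sum_congr rfl fun i _ => ?_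
    have : (Pi.basisFun ℝ (Fin n)).equivFun v i = v i := by
      simp [Pi.basisFun_equivFun]
    rw [this, smul_smul]
    congr 1
    ring
  have hTsmall : ∀ v : Fin n → ℝ, (∀ i, |v i| ≤ c) → f v = T v := by
    intro v hv
    have hv' : v = ∑ i, v i • e i := by
      conv_lhs => rw [← Finset.univ_sum_single v]
      refine Finset.sum_congr rfl fun i _ => ?_
      rw [he, ← Pi.single_smul, smul_eq_mul, mul_one]
    rw [hTapp]
    conv_lhs => rw [hv']
    exact hcomb Finset.univ v hv
  set η : ℝ := c₁ * c with hη
  have hηpos : 0 < η := by positivity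
  have hball : ∀ v : Fin n → ℝ, N₁ v ≤ η → f v = T v := by
    intro v hv
    apply hTsmall
    intro i
    have h1 : c₁ * ‖v‖ ≤ N₁ v := hc₁ v
    have h2 : |v i| ≤ ‖v‖ := by
      rw [← Real.norm_eq_abs]; exact norm_le_pi_norm v i
    have : c₁ * |v i| ≤ c₁ * c := by
      calc c₁ * |v i| ≤ c₁ * ‖v‖ := mul_le_mul_of_nonneg_left h2 (le_of_lt hc₁pos)
        _ ≤ N₁ v := h1
        _ ≤ η := hv
        _ = c₁ * c := hη
    exact le_of_mul_le_mul_left this hc₁pos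
  -- doubling
  have hdouble : ∀ (q : ℕ) (v : Fin n → ℝ), N₁ v ≤ 1 → N₁ v ≤ η * 2 ^ q → f v = T v := by
    intro q
    induction q with
    | zero => intro v _ h2; exact hball v (by simpa using h2)
    | succ q ih =>
      intro v h1 h2
      by_cases hle : N₁ v ≤ η * 2 ^ q
      · exact ih v h1 hle
      push_neg at hle
      set s' : ℝ := N₁ v with hs'
      set s : ℝ := η * 2 ^ q with hs
      have hspos : 0 < s := by positivity
      have hs'pos : 0 < s' := lt_trans hspos hle
      have hs'2 : s' ≤ 2 * s := by
        rw [hs]; rw [pow_succ] at h2; linarith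
      set lam : ℝ := 2 * s / s' - 1 with hlam
      have hlam0 : 0 ≤ lam := by
        rw [hlam, sub_nonneg, le_div_iff₀ hs'pos]
        linarith
      have hlam1 : lam ≤ 1 := by
        rw [hlam]
        have : 2 * s / s' ≤ 2 := by
          rw [div_le_iff₀ hs'pos]
          linarith
        linarith
      set x : Fin n → ℝ := lam • v with hx
      set m : Fin n → ℝ := (s / s') • v with hm
      have hdiv' : 2 * s / s' * s' = 2 * s := div_mul_cancel₀ _ (ne_of_gt hs'pos)
      have hNx : N₁ x = 2 * s - s' := by
        rw [hx, hsm₁, abs_of_nonneg hlam0, hlam, ← hs']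
        linear_combination hdiv'
      have hNm : N₁ m = s := by
        rw [hm, hsm₁, abs_of_pos (by positivity), ← hs']
        exact div_mul_cancel₀ _ (ne_of_gt hs'pos)
      have hxs : N₁ x ≤ s := by rw [hNx]; linarith
      have hxT : f x = T x := ih x (by rw [hNx]; linarith) (by rw [hNx]; linarith)
      have hmT : f m = T m := ih m (by rw [hNm]; linarith) (by rw [hNm])
      have hxv : N₁ (x - v) = 2 * (s' - s) := by
        have hxmv : x - v = (lam - 1) • v := by rw [hx]; module
        rw [hxmv, hsm₁, abs_of_nonpos (by linarith), ← hs', hlam]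
        linear_combination -hdiv'
      have hcond : N₁ x + N₁ (x - v) / 2 ≤ 1 := by
        rw [hNx, hxv]
        have : 2 * s - s' + 2 * (s' - s) / 2 = s := by ring
        rw [this]
        linarith
      have hmideq := hmid x v (by rw [hNx]; linarith) h1 hcond
      have hmidarg : (1/2 : ℝ) • (x + v) = m := by
        rw [hx, hm]
        have h5 : (1/2 : ℝ) • (lam • v + v) = ((lam + 1)/2) • v := by module
        rw [h5]
        congr 1
        rw [hlam]
        ring
      rw [hmidarg] at hmideq
      -- solve for f v
      have h6 : f v = (2:ℝ) • f m - f x := by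
        rw [hmideq]
        module
      rw [h6, hxT, hmT, ← map_smul, ← map_sub]
      congr 1
      rw [hm, hx, smul_smul]
      have h7 : ((2:ℝ) * (s / s')) • v - lam • v = ((2 * (s / s') - lam)) • v := by
        module
      rw [h7]
      have h8 : 2 * (s / s') - lam = 1 := by
        have : s / s' * s' = s := div_mul_cancel₀ _ (ne_of_gt hs'pos)
        rw [hlam]
        field_simp; ring
      rw [h8, one_smul]
  have hfT : ∀ v, N₁ v ≤ 1 → f v = T v := by
    intro v hv
    obtain ⟨q, hq⟩ := pow_unbounded_of_one_lt (1/η) (by norm_num : (1:ℝ) < 2)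
    apply hdouble q v hv
    have : 1 ≤ η * 2 ^ q := by
      rw [div_lt_iff₀ hηpos] at hq
      nlinarith
    linarith
  refine ⟨T, ?_, hfT⟩
  intro x y
  rw [← map_sub]
  suffices h : ∀ w, N₂ (T w) = N₁ w by exact h (x - y)
  intro w
  rcases eq_or_ne w 0 with rfl | hw
  · simp
  · have hNw : 0 < N₁ w := by
      rcases lt_or_eq_of_le (apply_nonneg N₁ w) with h | h
      · exact h
      · exact absurd (h₁ w h.symm) hw
    set t : ℝ := (N₁ w)⁻¹ with ht
    have htpos : 0 < t := by positivity
    have htw : N₁ (t • w) = 1 := by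
      rw [hsm₁, abs_of_pos htpos, ht]
      field_simp
    have h1 : N₂ (f (t • w)) = N₁ (t • w) := hfnorm _ (le_of_eq htw)
    rw [hfT _ (le_of_eq htw), map_smul, hsm₂, abs_of_pos htpos, htw] at h1
    have hne : N₁ w ≠ 0 := ne_of_gt hNw
    have h9 := congrArg (fun z => N₁ w * z) h1
    rw [ht, ← mul_assoc, mul_inv_cancel₀ hne, one_mul, mul_one] at h9
    rw [h9]


set_option maxHeartbeats 1000000

/-- A sequence of `δᵢ`-GHAs between the unit balls of two norms on `ℝⁿ`,
with `δᵢ → 0`, has a subsequence converging uniformly (quantitatively in `ε`) to a linear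
isometry between the two norms. -/
theorem GHA_limit_linear_isometry (n : ℕ) (N₁ N₂ : Seminorm ℝ (Fin n → ℝ))
    (h₁ : ∀ v, N₁ v = 0 → v = 0) (h₂ : ∀ v, N₂ v = 0 → v = 0)
    (δ : ℕ → ℝ) (hδ : Filter.Tendsto δ Filter.atTop (nhds 0))
    (φ : ℕ → (Fin n → ℝ) → (Fin n → ℝ))
    (hmem : ∀ i, ∀ v, N₁ v ≤ 1 → N₂ (φ i v) ≤ 1)
    (hiso : ∀ i, ∀ v w, N₁ v ≤ 1 → N₁ w ≤ 1 →
      |N₁ (v - w) - N₂ (φ i v - φ i w)| ≤ δ i)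
    (hdense : ∀ i, ∀ u, N₂ u ≤ 1 → ∃ v, N₁ v ≤ 1 ∧ N₂ (u - φ i v) ≤ δ i) :
    ∃ k : ℕ → ℕ, StrictMono k ∧
      ∀ ε : ℝ, 0 < ε →
        ∃ (K : ℕ) (T : (Fin n → ℝ) →ₗ[ℝ] (Fin n → ℝ)),
          (∀ x y : Fin n → ℝ, N₂ (T x - T y) = N₁ (x - y)) ∧
          ∀ j : ℕ, K ≤ j → ∀ v, N₁ v ≤ 1 → N₂ (φ (k j) v - T v) ≤ ε := by
  classical
  obtain ⟨C₁, hC₁pos, hC₁⟩ := seminorm_upper_bound N₁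
  obtain ⟨C₂, hC₂pos, hC₂⟩ := seminorm_upper_bound N₂
  obtain ⟨c₁, hc₁pos, hc₁⟩ := seminorm_lower_bound N₁ h₁
  obtain ⟨c₂, hc₂pos, hc₂⟩ := seminorm_lower_bound N₂ h₂
  have hδ0 : ∀ i, 0 ≤ δ i := by
    intro i
    have h := hiso i 0 0 (by simp) (by simp)
    exact le_trans (abs_nonneg _) h
  -- dense sequence in the unit ball of N₁
  haveI hBne : Nonempty {v : Fin n → ℝ // N₁ v ≤ 1} := ⟨⟨0, by simp⟩⟩
  obtain ⟨d₀, hd₀⟩ := TopologicalSpace.exists_dense_seq {v : Fin n → ℝ // N₁ v ≤ 1}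
  set d : ℕ → (Fin n → ℝ) := fun m => (d₀ m).1 with hd
  have hdB : ∀ m, N₁ (d m) ≤ 1 := fun m => (d₀ m).2
  have hdense' : ∀ v, N₁ v ≤ 1 → ∀ ε > 0, ∃ m, ‖v - d m‖ < ε := by
    intro v hv ε hε
    obtain ⟨m, hm⟩ := Metric.denseRange_iff.mp hd₀ ⟨v, hv⟩ ε hε
    rw [Subtype.dist_eq, dist_eq_norm] at hm
    exact ⟨m, hm⟩
  -- extract a subsequence converging at every d m
  set R : ℝ := 1 / c₂ with hR
  have hφR : ∀ i m, φ i (d m) ∈ Metric.closedBall (0 : Fin n → ℝ) R := by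
    intro i m
    rw [Metric.mem_closedBall, dist_zero_right, hR, le_div_iff₀ hc₂pos]
    nlinarith [hmem i (d m) (hdB m), hc₂ (φ i (d m))]
  haveI : CompactSpace (Metric.closedBall (0 : Fin n → ℝ) R) :=
    isCompact_iff_compactSpace.mp (isCompact_closedBall _ _)
  set G : ℕ → (ℕ → (Metric.closedBall (0 : Fin n → ℝ) R)) :=
    fun i m => ⟨φ i (d m), hφR i m⟩ with hG
  obtain ⟨L, -, k, hk, hGconv⟩ :=
    IsCompact.tendsto_subseq (x := G) isCompact_univ (fun i => Set.mem_univ _)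
  have hconv : ∀ m, Tendsto (fun j => φ (k j) (d m)) atTop (𝓝 ((L m : Fin n → ℝ))) := by
    intro m
    have h1 : Tendsto (fun j => (G ∘ k) j m) atTop (𝓝 (L m)) := tendsto_pi_nhds.mp hGconv m
    exact (continuous_subtype_val.tendsto (L m)).comp h1
  refine ⟨k, hk, ?_⟩
  set ψ : ℕ → (Fin n → ℝ) → (Fin n → ℝ) := fun j => φ (k j) with hψ
  set δ' : ℕ → ℝ := fun j => δ (k j) with hδ'def
  have hδ'0 : ∀ j, 0 ≤ δ' j := fun j => hδ0 _
  have hδ'lim : Tendsto δ' atTop (𝓝 0) := hδ.comp hk.tendsto_atTop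
  have hmem' : ∀ j v, N₁ v ≤ 1 → N₂ (ψ j v) ≤ 1 := fun j => hmem (k j)
  have hiso' : ∀ j v w, N₁ v ≤ 1 → N₁ w ≤ 1 →
      |N₁ (v - w) - N₂ (ψ j v - ψ j w)| ≤ δ' j := fun j => hiso (k j)
  have hdense2 : ∀ j u, N₂ u ≤ 1 → ∃ v, N₁ v ≤ 1 ∧ N₂ (u - ψ j v) ≤ δ' j :=
    fun j => hdense (k j)
  have hNN : ∀ j v w, N₁ v ≤ 1 → N₁ w ≤ 1 → N₂ (ψ j v - ψ j w) ≤ N₁ (v - w) + δ' j := by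
    intro j v w hv hw
    have h := hiso' j v w hv hw
    rw [abs_le] at h
    linarith [h.1]
  -- pointwise convergence on the whole ball
  have key : ∀ v, N₁ v ≤ 1 → ∃ u, Tendsto (fun j => ψ j v) atTop (𝓝 u) := by
    intro v hv
    apply cauchySeq_tendsto_of_complete
    rw [Metric.cauchySeq_iff]
    intro ε hε
    obtain ⟨m, hm⟩ := hdense' v hv (c₂ * ε / (8 * C₁)) (by positivity)
    have hNvd : N₁ (v - d m) ≤ c₂ * ε / 8 := by
      calc N₁ (v - d m) ≤ C₁ * ‖v - d m‖ := hC₁ _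
        _ ≤ C₁ * (c₂ * ε / (8 * C₁)) :=
            mul_le_mul_of_nonneg_left (le_of_lt hm) (le_of_lt hC₁pos)
        _ = c₂ * ε / 8 := by field_simp
    have hCau : CauchySeq (fun j => ψ j (d m)) := (hconv m).cauchySeq
    rw [Metric.cauchySeq_iff] at hCau
    obtain ⟨J₁, hJ₁⟩ := hCau (c₂ * ε / (4 * C₂)) (by positivity)
    obtain ⟨J₂, hJ₂⟩ := (Metric.tendsto_atTop.mp hδ'lim) (c₂ * ε / 8) (by positivity)
    refine ⟨max J₁ J₂, fun a ha b hb => ?_⟩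
    have hδa : δ' a ≤ c₂ * ε / 8 := by
      have := hJ₂ a (le_trans (le_max_right _ _) ha)
      rw [Real.dist_eq, abs_sub_comm, abs_of_nonpos (by linarith [hδ'0 a])] at this
      linarith
    have hδb : δ' b ≤ c₂ * ε / 8 := by
      have := hJ₂ b (le_trans (le_max_right _ _) hb)
      rw [Real.dist_eq, abs_sub_comm, abs_of_nonpos (by linarith [hδ'0 b])] at this
      linarith
    have hmid : N₂ (ψ a (d m) - ψ b (d m)) ≤ c₂ * ε / 4 := by
      have h1 := hJ₁ a (le_trans (le_max_left _ _) ha) b (le_trans (le_max_left _ _) hb)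
      rw [dist_eq_norm] at h1
      calc N₂ (ψ a (d m) - ψ b (d m)) ≤ C₂ * ‖ψ a (d m) - ψ b (d m)‖ := hC₂ _
        _ ≤ C₂ * (c₂ * ε / (4 * C₂)) := mul_le_mul_of_nonneg_left (le_of_lt h1) (le_of_lt hC₂pos)
        _ = c₂ * ε / 4 := by field_simp
    have hsplit : ψ a v - ψ b v =
        (ψ a v - ψ a (d m)) + (ψ a (d m) - ψ b (d m)) + (ψ b (d m) - ψ b v) := by abel
    have hbig : N₂ (ψ a v - ψ b v) ≤ 3 * (c₂ * ε) / 4 := by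
      rw [hsplit]
      have e1 : N₂ (ψ a v - ψ a (d m)) ≤ c₂ * ε / 8 + c₂ * ε / 8 := by
        have := hNN a v (d m) hv (hdB m)
        linarith
      have e3 : N₂ (ψ b (d m) - ψ b v) ≤ c₂ * ε / 8 + c₂ * ε / 8 := by
        have h9 := hNN b (d m) v (hdB m) hv
        have h10 : N₁ (d m - v) = N₁ (v - d m) := map_sub_rev N₁ _ _
        linarith
      calc N₂ _ ≤ N₂ ((ψ a v - ψ a (d m)) + (ψ a (d m) - ψ b (d m))) + N₂ (ψ b (d m) - ψ b v) :=
            map_add_le_add _ _ _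
        _ ≤ N₂ (ψ a v - ψ a (d m)) + N₂ (ψ a (d m) - ψ b (d m)) + N₂ (ψ b (d m) - ψ b v) := by
            have := map_add_le_add N₂ (ψ a v - ψ a (d m)) (ψ a (d m) - ψ b (d m))
            linarith
        _ ≤ 3 * (c₂ * ε) / 4 := by linarith
    rw [dist_eq_norm]
    have hfin : c₂ * ‖ψ a v - ψ b v‖ ≤ 3 * (c₂ * ε) / 4 := le_trans (hc₂ _) hbig
    nlinarith
  -- the limit function
  set f : (Fin n → ℝ) → (Fin n → ℝ) :=
    fun v => if h : ∃ u, Tendsto (fun j => ψ j v) atTop (𝓝 u) then h.choose else 0 with hfdef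
  have hf : ∀ v, N₁ v ≤ 1 → Tendsto (fun j => ψ j v) atTop (𝓝 (f v)) := by
    intro v hv
    have h := key v hv
    have hfv : f v = h.choose := by rw [hfdef]; exact dif_pos h
    rw [hfv]
    exact h.choose_spec
  -- properties of f
  have hfiso : ∀ v w, N₁ v ≤ 1 → N₁ w ≤ 1 → N₂ (f v - f w) = N₁ (v - w) := by
    intro v w hv hw
    have t1 : Tendsto (fun j => N₂ (ψ j v - ψ j w)) atTop (𝓝 (N₂ (f v - f w))) :=
      ((seminorm_continuous N₂).tendsto _).comp ((hf v hv).sub (hf w hw))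
    have t2 : Tendsto (fun j => N₂ (ψ j v - ψ j w)) atTop (𝓝 (N₁ (v - w))) := by
      rw [tendsto_iff_dist_tendsto_zero]
      apply squeeze_zero (fun j => dist_nonneg) (fun j => ?_) hδ'lim
      rw [Real.dist_eq, abs_sub_comm]
      exact hiso' j v w hv hw
    exact tendsto_nhds_unique t1 t2
  have hfsurj : ∀ u, N₂ u ≤ 1 → ∃ z, N₁ z ≤ 1 ∧ f z = u := by
    intro u hu
    choose w hw1 hw2 using fun j => hdense2 j u hu
    have hwball : ∀ j, w j ∈ Metric.closedBall (0 : Fin n → ℝ) (1/c₁) := by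
      intro j
      rw [Metric.mem_closedBall, dist_zero_right, le_div_iff₀ hc₁pos]
      nlinarith [hc₁ (w j), hw1 j]
    obtain ⟨z, -, l, hl, hzconv⟩ :=
      IsCompact.tendsto_subseq (isCompact_closedBall (0 : Fin n → ℝ) (1/c₁)) hwball
    have hzB : N₁ z ≤ 1 := by
      have ht : Tendsto (fun a => N₁ ((w ∘ l) a)) atTop (𝓝 (N₁ z)) :=
        ((seminorm_continuous N₁).tendsto _).comp hzconv
      exact le_of_tendsto ht (Eventually.of_forall fun a => hw1 _)
    refine ⟨z, hzB, ?_⟩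
    have hbound : ∀ a, N₂ (u - f z) ≤
        δ' (l a) + (N₁ (w (l a) - z) + δ' (l a)) + N₂ (ψ (l a) z - f z) := by
      intro a
      have hsp : u - f z = (u - ψ (l a) (w (l a))) + (ψ (l a) (w (l a)) - ψ (l a) z)
          + (ψ (l a) z - f z) := by abel
      rw [hsp]
      have e1 : N₂ (u - ψ (l a) (w (l a))) ≤ δ' (l a) := hw2 (l a)
      have e2 : N₂ (ψ (l a) (w (l a)) - ψ (l a) z) ≤ N₁ (w (l a) - z) + δ' (l a) :=
        hNN (l a) (w (l a)) z (hw1 _) hzB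
      have t1 := map_add_le_add N₂ ((u - ψ (l a) (w (l a))) + (ψ (l a) (w (l a)) - ψ (l a) z))
        (ψ (l a) z - f z)
      have t2 := map_add_le_add N₂ (u - ψ (l a) (w (l a))) (ψ (l a) (w (l a)) - ψ (l a) z)
      linarith
    have hδl : Tendsto (fun a => δ' (l a)) atTop (𝓝 0) := hδ'lim.comp hl.tendsto_atTop
    have hwz : Tendsto (fun a => N₁ (w (l a) - z)) atTop (𝓝 0) := by
      have h5 : Tendsto (fun a => (w ∘ l) a - z) atTop (𝓝 (z - z)) :=
        hzconv.sub tendsto_const_nhds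
      rw [sub_self] at h5
      have h6 := ((seminorm_continuous N₁).tendsto 0).comp h5
      rw [map_zero] at h6
      exact h6
    have hψz : Tendsto (fun a => N₂ (ψ (l a) z - f z)) atTop (𝓝 0) := by
      have h5 : Tendsto (fun j => ψ j z - f z) atTop (𝓝 (f z - f z)) :=
        (hf z hzB).sub tendsto_const_nhds
      rw [sub_self] at h5
      have h6 := ((seminorm_continuous N₂).tendsto 0).comp h5
      rw [map_zero] at h6
      exact h6.comp hl.tendsto_atTop
    have hlim : Tendsto (fun a => δ' (l a) + (N₁ (w (l a) - z) + δ' (l a))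
        + N₂ (ψ (l a) z - f z)) atTop (𝓝 0) := by
      have := (hδl.add (hwz.add hδl)).add hψz
      simpa using this
    have hle : N₂ (u - f z) ≤ 0 := ge_of_tendsto hlim (Eventually.of_forall hbound)
    have h0 : N₂ (u - f z) = 0 := le_antisymm hle (apply_nonneg _ _)
    exact (sub_eq_zero.mp (h₂ _ h0)).symm
  have hfmem : ∀ v, N₁ v ≤ 1 → N₂ (f v) ≤ 1 := by
    intro v hv
    have t1 : Tendsto (fun j => N₂ (ψ j v)) atTop (𝓝 (N₂ (f v))) :=
      ((seminorm_continuous N₂).tendsto _).comp (hf v hv)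
    exact le_of_tendsto t1 (Eventually.of_forall fun j => hmem' j v hv)
  have hfnorm : ∀ v, N₁ v ≤ 1 → N₂ (f v) = N₁ v := by
    intro v hv
    have hle : N₂ (f v) ≤ N₁ v := by
      rcases eq_or_ne (f v) 0 with h | h
      · rw [h, map_zero]; exact apply_nonneg _ _
      · have hN2pos : 0 < N₂ (f v) :=
          lt_of_le_of_ne (apply_nonneg _ _) (fun hc => h (h₂ _ hc.symm))
        set u : Fin n → ℝ := (-(N₂ (f v))⁻¹) • f v with hu
        have hNu : N₂ u = 1 := by
          rw [hu, map_smul_eq_mul, Real.norm_eq_abs, abs_neg, abs_of_pos (by positivity)]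
          field_simp
        obtain ⟨z, hz1, hz2⟩ := hfsurj u (le_of_eq hNu)
        have hval : N₂ (f v - u) = N₂ (f v) + 1 := by
          have hrw : f v - u = (1 + (N₂ (f v))⁻¹) • f v := by rw [hu]; module
          rw [hrw, map_smul_eq_mul, Real.norm_eq_abs, abs_of_pos (by positivity)]
          field_simp
        have h5 : N₁ (v - z) = N₂ (f v - u) := by rw [← hz2]; exact (hfiso v z hv hz1).symm
        have h6 : N₁ (v - z) ≤ N₁ v + 1 := by
          have t1 := map_add_le_add N₁ v (-z)
          rw [map_neg_eq_map] at t1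
          have t2 : v - z = v + (-z) := by abel
          rw [t2]
          linarith
        rw [h5, hval] at h6
        linarith
    have hge : N₁ v ≤ N₂ (f v) := by
      rcases eq_or_ne v 0 with rfl | h
      · rw [map_zero]; exact apply_nonneg _ _
      · have hN1pos : 0 < N₁ v :=
          lt_of_le_of_ne (apply_nonneg _ _) (fun hc => h (h₁ _ hc.symm))
        set w : Fin n → ℝ := (-(N₁ v)⁻¹) • v with hw
        have hNw : N₁ w = 1 := by
          rw [hw, map_smul_eq_mul, Real.norm_eq_abs, abs_neg, abs_of_pos (by positivity)]
          field_simp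
        have hval : N₁ (v - w) = N₁ v + 1 := by
          have hrw : v - w = (1 + (N₁ v)⁻¹) • v := by rw [hw]; module
          rw [hrw, map_smul_eq_mul, Real.norm_eq_abs, abs_of_pos (by positivity)]
          field_simp
        have h5 : N₂ (f v - f w) = N₁ v + 1 := by rw [hfiso v w hv (le_of_eq hNw), hval]
        have h6 : N₂ (f v - f w) ≤ N₂ (f v) + 1 := by
          have t1 := map_add_le_add N₂ (f v) (-(f w))
          rw [map_neg_eq_map] at t1
          have t2 : f v - f w = f v + (-(f w)) := by abel
          rw [t2]
          have := hfmem w (le_of_eq hNw)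
          linarith
        linarith [h5 ▸ h6]
    linarith
  -- linearize
  obtain ⟨T, hTiso, hfT⟩ := linearize N₁ N₂ h₁ h₂ f hfiso hfsurj hfnorm
  -- uniform convergence
  intro ε hε
  set ε₀ : ℝ := ε / (4 * C₁) with hε₀
  have hε₀pos : 0 < ε₀ := by positivity
  have hBsub : {v : Fin n → ℝ | N₁ v ≤ 1} ⊆ Metric.closedBall (0 : Fin n → ℝ) (1/c₁) := by
    intro v hv
    rw [Metric.mem_closedBall, dist_zero_right, le_div_iff₀ hc₁pos]
    nlinarith [hc₁ v, Set.mem_setOf_eq ▸ hv]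
  have hBclosed : IsClosed {v : Fin n → ℝ | N₁ v ≤ 1} := by
    have heq : {v : Fin n → ℝ | N₁ v ≤ 1} = (fun v => N₁ v) ⁻¹' Set.Iic 1 := rfl
    rw [heq]
    exact IsClosed.preimage (seminorm_continuous N₁) isClosed_Iic
  have hBcomp : IsCompact {v : Fin n → ℝ | N₁ v ≤ 1} :=
    (isCompact_closedBall (0 : Fin n → ℝ) (1/c₁)).of_isClosed_subset hBclosed hBsub
  have hcover : {v : Fin n → ℝ | N₁ v ≤ 1} ⊆ ⋃ m : ℕ, Metric.ball (d m) ε₀ := by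
    intro v hv
    obtain ⟨m, hm⟩ := hdense' v hv ε₀ hε₀pos
    exact Set.mem_iUnion.mpr ⟨m, by rw [Metric.mem_ball, dist_eq_norm]; exact hm⟩
  obtain ⟨t, ht⟩ := hBcomp.elim_finite_subcover (fun m => Metric.ball (d m) ε₀)
    (fun m => Metric.isOpen_ball) hcover
  have hptw : ∀ m : ℕ, ∃ Km : ℕ, ∀ j, Km ≤ j → ‖ψ j (d m) - f (d m)‖ ≤ ε / (4 * C₂) := by
    intro m
    obtain ⟨Km, hKm⟩ := (Metric.tendsto_atTop.mp (hf (d m) (hdB m))) (ε / (4 * C₂)) (by positivity)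
    refine ⟨Km, fun j hj => ?_⟩
    rw [← dist_eq_norm]
    exact le_of_lt (hKm j hj)
  choose KK hKK using hptw
  obtain ⟨Kδ, hKδ⟩ := (Metric.tendsto_atTop.mp hδ'lim) (ε / 4) (by positivity)
  refine ⟨max (t.sup KK) Kδ, T, hTiso, ?_⟩
  intro j hj v hv
  have hδj : δ' j ≤ ε / 4 := by
    have := hKδ j (le_trans (le_max_right _ _) hj)
    rw [Real.dist_eq, abs_sub_comm, abs_of_nonpos (by linarith [hδ'0 j])] at this
    linarith
  obtain ⟨m, hmt, hmball⟩ : ∃ m ∈ t, v ∈ Metric.ball (d m) ε₀ := by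
    have := ht hv
    simpa using Set.mem_iUnion₂.mp this
  have hvd : ‖v - d m‖ < ε₀ := by rw [← dist_eq_norm]; exact hmball
  have hN1vd : N₁ (v - d m) ≤ ε / 4 := by
    calc N₁ (v - d m) ≤ C₁ * ‖v - d m‖ := hC₁ _
      _ ≤ C₁ * ε₀ := mul_le_mul_of_nonneg_left (le_of_lt hvd) (le_of_lt hC₁pos)
      _ = ε / 4 := by rw [hε₀]; field_simp
  have hmidb : N₂ (ψ j (d m) - f (d m)) ≤ ε / 4 := by
    have h8 : KK m ≤ j := le_trans (le_trans (Finset.le_sup hmt) (le_max_left _ _)) hj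
    calc N₂ (ψ j (d m) - f (d m)) ≤ C₂ * ‖ψ j (d m) - f (d m)‖ := hC₂ _
      _ ≤ C₂ * (ε / (4 * C₂)) :=
          mul_le_mul_of_nonneg_left (hKK m j h8) (le_of_lt hC₂pos)
      _ = ε / 4 := by field_simp
  have hlast : N₂ (f (d m) - f v) ≤ ε / 4 := by
    rw [hfiso (d m) v (hdB m) hv, map_sub_rev]
    exact hN1vd
  have hfirst : N₂ (ψ j v - ψ j (d m)) ≤ ε / 4 + ε / 4 := by
    have := hNN j v (d m) hv (hdB m)
    linarith
  have hsplit : ψ j v - f v = (ψ j v - ψ j (d m)) + (ψ j (d m) - f (d m)) + (f (d m) - f v) := by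
    abel
  have hgoal : N₂ (ψ j v - f v) ≤ ε := by
    rw [hsplit]
    have t1 := map_add_le_add N₂ ((ψ j v - ψ j (d m)) + (ψ j (d m) - f (d m))) (f (d m) - f v)
    have t2 := map_add_le_add N₂ (ψ j v - ψ j (d m)) (ψ j (d m) - f (d m))
    linarith
  have hTv : T v = f v := (hfT v hv).symm
  calc N₂ (φ (k j) v - T v) = N₂ (ψ j v - f v) := by rw [hTv]
    _ ≤ ε := hgoal
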